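/- Suppose 1/p + 1/q + 1/r < 1. Then the root lattice L_n = κ^⊥ ∩ Λ_n is hyperbolic: the restriction of the bilinear form to L_n ⊗ ℝ is nondegenerate of signature (1, n−1), i.e. L_n ⊗ ℝ admits an orthogonal basis consisting of one vector of positive square and n−1 vectors of negative square. -/

import Mathlib

open Finset

/-- Index type for the standard basis of the lattice `Λ_n` (of rank `n+1 = p+q+r-1`):
`Sum.inl i` corresponds to `h_{i+1}` (`0 ≤ i ≤ p-2`) and `Sum.inr j` to `e_{j+1}`
(`0 ≤ j ≤ q+r-1`). -/
abbrev Idx (p q r : ℕ) : Type := Fin (p - 1) ⊕ Fin (q + r)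

/-- The Gram matrix of the inner product of `Λ_n` in the standard basis:
`h_i·h_i = r-2`, `h_i·h_j = r-1` (`i ≠ j`), `h_i·e_j = 0`, `e_j·e_j = -1`,
`e_i·e_j = 0` (`i ≠ j`). -/
def gram (p q r : ℕ) : Idx p q r → Idx p q r → ℤ
  | Sum.inl i, Sum.inl j => if i = j then (r : ℤ) - 2 else (r : ℤ) - 1
  | Sum.inr i, Sum.inr j => if i = j then -1 else 0
  | _, _ => 0

/-- The symmetric bilinear form ("inner product") on `Λ_n ⊗ R`. -/
def bform {R : Type*} [CommRing R] (p q r : ℕ) (x y : Idx p q r → R) : R :=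
  ∑ i : Idx p q r, ∑ j : Idx p q r, x i * y j * ((gram p q r i j : ℤ) : R)

/-- The basis vector `h_{i+1}` of `Λ_n`. -/
def hvec (p q r : ℕ) (i : Fin (p - 1)) : Idx p q r → ℤ :=
  fun k => if k = Sum.inl i then 1 else 0

/-- The basis vector `e_{j+1}` of `Λ_n`. -/
def evec (p q r : ℕ) (j : Fin (q + r)) : Idx p q r → ℤ :=
  fun k => if k = Sum.inr j then 1 else 0

/-- `κ = r·∑ h_i − ((p−1)(r−1)−1)·∑ e_j`. -/
def kappa (p q r : ℕ) : Idx p q r → ℤ :=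
  (r : ℤ) • ∑ i, hvec p q r i - (((p : ℤ) - 1) * ((r : ℤ) - 1) - 1) • ∑ j, evec p q r j

lemma bform_add_left {R : Type*} [CommRing R] (p q r : ℕ) (x x' y : Idx p q r → R) :
    bform p q r (x + x') y = bform p q r x y + bform p q r x' y := by
  simp [bform, add_mul, Finset.sum_add_distrib]

lemma bform_smul_left {R : Type*} [CommRing R] (p q r : ℕ) (c : R) (x y : Idx p q r → R) :
    bform p q r (c • x) y = c * bform p q r x y := by
  unfold bform
  rw [Finset.mul_sum]
  refine Finset.sum_congr rfl fun i _ => ?_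
  rw [Finset.mul_sum]
  refine Finset.sum_congr rfl fun j _ => ?_
  simp only [Pi.smul_apply, smul_eq_mul]
  ring

/-- The reflection `r_α : x ↦ x + (x·α)α`, as a `ℤ`-linear endomorphism of `Λ_n`. -/
def reflectL (p q r : ℕ) (α : Idx p q r → ℤ) : Module.End ℤ (Idx p q r → ℤ) where
  toFun x := x + bform p q r x α • α
  map_add' x y := by
    simp only [bform_add_left, add_smul]
    abel
  map_smul' c x := by
    simp only [bform_smul_left, smul_eq_mul, RingHom.id_apply, mul_smul, smul_add]

/-- The root lattice `L_n = κ^⊥ ∩ Λ_n`, as a `ℤ`-submodule of `Λ_n`. -/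
def Lsub (p q r : ℕ) : Submodule ℤ (Idx p q r → ℤ) where
  carrier := { x | bform p q r x (kappa p q r) = 0 }
  add_mem' := by
    intro a b ha hb
    simp only [Set.mem_setOf_eq] at ha hb ⊢
    rw [bform_add_left, ha, hb, add_zero]
  zero_mem' := by
    simp [Set.mem_setOf_eq, bform]
  smul_mem' := by
    intro c x hx
    simp only [Set.mem_setOf_eq] at hx ⊢
    rw [bform_smul_left, hx, mul_zero]

/-- The simple root `α_0 = h_1 − ∑_{i=1}^{r} e_i`. -/
def alpha0 (p q r : ℕ) : Idx p q r → ℤ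
  | Sum.inl i => if (i : ℕ) = 0 then 1 else 0
  | Sum.inr j => if (j : ℕ) < r then -1 else 0

/-- The set of simple roots `β_1, …, β_{p−2}, α_0, α_1, …, α_{q+r−1}`. -/
def simpleRootSet (p q r : ℕ) : Set (Idx p q r → ℤ) :=
  { α | (∃ i j : Fin (p - 1), (j : ℕ) = (i : ℕ) + 1 ∧ α = -hvec p q r i + hvec p q r j) ∨
        α = alpha0 p q r ∨
        (∃ i j : Fin (q + r), (j : ℕ) = (i : ℕ) + 1 ∧ α = evec p q r i - evec p q r j) }

/-- The Weyl group `W(T_{p,q,r})`, generated by the reflections in the simple roots.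
(Each generating reflection is an involution, so this multiplicatively closed set is
in fact a group of automorphisms of `Λ_n`.) -/
def weylGroup (p q r : ℕ) : Submonoid (Module.End ℤ (Idx p q r → ℤ)) :=
  Submonoid.closure { w | ∃ α ∈ simpleRootSet p q r, w = reflectL p q r α }

/-- The set of roots `Δ_n`: all images of simple roots under elements of the Weyl group. -/
def rootSet (p q r : ℕ) : Set (Idx p q r → ℤ) :=
  { x | ∃ w ∈ weylGroup p q r, ∃ γ ∈ simpleRootSet p q r, x = w γ }

/-- The matrix (over `ℂ`) of the `ℂ`-linear extension of `w` to `Λ_n ⊗ ℂ`. -/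
noncomputable def matC (p q r : ℕ) (w : Module.End ℤ (Idx p q r → ℤ)) :
    Matrix (Idx p q r) (Idx p q r) ℂ :=
  (LinearMap.toMatrix' w).map fun a => (a : ℂ)

/-- `ρ` is the spectral radius of (the `ℂ`-linear extension of) `w`:
the maximum of the absolute values of its eigenvalues. -/
def IsSpectralRadius (p q r : ℕ) (w : Module.End ℤ (Idx p q r → ℤ)) (ρ : ℝ) : Prop :=
  (∃ (μ : ℂ) (v : Idx p q r → ℂ), v ≠ 0 ∧ (matC p q r w).mulVec v = μ • v ∧
      ‖μ‖ = ρ) ∧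
  ∀ (μ : ℂ) (v : Idx p q r → ℂ), v ≠ 0 → (matC p q r w).mulVec v = μ • v →
      ‖μ‖ ≤ ρ

/-- `w` is a Coxeter element: a product of the `n` simple reflections,
each occurring exactly once, in some order. -/
def IsCoxeterElement (p q r : ℕ) (w : Module.End ℤ (Idx p q r → ℤ)) : Prop :=
  ∃ l : List (Idx p q r → ℤ), l.Nodup ∧ (∀ γ, γ ∈ l ↔ γ ∈ simpleRootSet p q r) ∧
    w = (l.map (reflectL p q r)).prod

/-- The simple roots as a family indexed by `Fin (p−2) ⊕ Fin (q+r)`: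
`Sum.inl i ↦ β_{i+1}`, `Sum.inr 0 ↦ α_0`, `Sum.inr k ↦ α_k` (`k ≥ 1`). -/
def simpleRoot (p q r : ℕ) : Fin (p - 2) ⊕ Fin (q + r) → (Idx p q r → ℤ)
  | Sum.inl i =>
      -hvec p q r ⟨i.1, by have := i.isLt; omega⟩ +
        hvec p q r ⟨i.1 + 1, by have := i.isLt; omega⟩
  | Sum.inr k =>
      if (k : ℕ) = 0 then alpha0 p q r
      else evec p q r ⟨k.1 - 1, by have := k.isLt; omega⟩ - evec p q r k

/-- Adjacency in the T-shaped Dynkin diagram `T_{p,q,r}`, in terms of the indexing of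
`simpleRoot`: the chain `α_1 — α_2 — ⋯ — α_{q+r−1}`, the edge `α_0 — α_r`, the edge
`α_0 — β_1`, and the chain `β_1 — β_2 — ⋯ — β_{p−2}`. -/
def adjacent (p q r : ℕ) : (Fin (p - 2) ⊕ Fin (q + r)) → (Fin (p - 2) ⊕ Fin (q + r)) → Prop
  | Sum.inl i, Sum.inl i' => (i' : ℕ) = (i : ℕ) + 1 ∨ (i : ℕ) = (i' : ℕ) + 1
  | Sum.inr k, Sum.inr k' =>
      (1 ≤ (k : ℕ) ∧ (k' : ℕ) = (k : ℕ) + 1) ∨ (1 ≤ (k' : ℕ) ∧ (k : ℕ) = (k' : ℕ) + 1) ∨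
      ((k : ℕ) = 0 ∧ (k' : ℕ) = r) ∨ ((k' : ℕ) = 0 ∧ (k : ℕ) = r)
  | Sum.inl i, Sum.inr k => (i : ℕ) = 0 ∧ (k : ℕ) = 0
  | Sum.inr k, Sum.inl i => (i : ℕ) = 0 ∧ (k : ℕ) = 0

/-- `κ` with real coefficients. -/
def kappaR (p q r : ℕ) : Idx p q r → ℝ := fun k => ((kappa p q r k : ℤ) : ℝ)

/-- `L_n ⊗ ℝ = κ^⊥`, as an `ℝ`-subspace of `Λ_n ⊗ ℝ`. -/
def LsubR (p q r : ℕ) : Submodule ℝ (Idx p q r → ℝ) where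
  carrier := { x | bform p q r x (kappaR p q r) = 0 }
  add_mem' := by
    intro a b ha hb
    simp only [Set.mem_setOf_eq] at ha hb ⊢
    rw [bform_add_left, ha, hb, add_zero]
  zero_mem' := by
    simp [Set.mem_setOf_eq, bform]
  smul_mem' := by
    intro c x hx
    simp only [Set.mem_setOf_eq] at hx ⊢
    rw [bform_smul_left, hx, mul_zero]

section Aux

lemma gram_symm (p q r : ℕ) (i j : Idx p q r) : gram p q r i j = gram p q r j i := by
  rcases i with i | i <;> rcases j with j | j <;> simp only [gram]
  · rcases eq_or_ne i j with h | h
    · subst h; rfl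
    · rw [if_neg h, if_neg h.symm]
  · rcases eq_or_ne i j with h | h
    · subst h; rfl
    · rw [if_neg h, if_neg h.symm]

lemma bform_comm {R : Type*} [CommRing R] (p q r : ℕ) (x y : Idx p q r → R) :
    bform p q r x y = bform p q r y x := by
  unfold bform
  rw [Finset.sum_comm]
  refine Finset.sum_congr rfl fun j _ => Finset.sum_congr rfl fun i _ => ?_
  rw [gram_symm]; ring

lemma bform_eq (p q r : ℕ) (x y : Idx p q r → ℝ) :
    bform p q r x y =
      ((r:ℝ) - 1) * ((∑ i, x (Sum.inl i)) * (∑ i, y (Sum.inl i)))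
        - (∑ i, x (Sum.inl i) * y (Sum.inl i))
        - ∑ j, x (Sum.inr j) * y (Sum.inr j) := by
  have h1 : ∀ a b : Fin (p-1), ((if a = b then (r:ℤ)-2 else (r:ℤ)-1 : ℤ) : ℝ)
      = ((r:ℝ)-1) - (if a = b then 1 else 0) := by
    intro a b; split_ifs <;> push_cast <;> ring
  have h2 : ∀ a b : Fin (q+r), ((if a = b then (-1:ℤ) else 0 : ℤ) : ℝ)
      = -(if a = b then (1:ℝ) else 0) := by
    intro a b; split_ifs <;> push_cast <;> ring
  unfold bform
  simp only [Fintype.sum_sum_type, gram, h1, h2, Int.cast_zero, mul_zero,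
    Finset.sum_const_zero, add_zero, zero_add, mul_sub, mul_neg, mul_ite, mul_one,
    Finset.sum_sub_distrib, Finset.sum_neg_distrib, Finset.sum_ite_eq, Finset.mem_univ,
    if_true]
  have e1 : ∑ a : Fin (p-1), ∑ b : Fin (p-1), x (Sum.inl a) * y (Sum.inl b) * (r:ℝ)
      = (r:ℝ) * ∑ a : Fin (p-1), ∑ b : Fin (p-1), x (Sum.inl a) * y (Sum.inl b) := by
    rw [Finset.mul_sum]
    refine Finset.sum_congr rfl fun a _ => ?_
    rw [Finset.mul_sum]
    exact Finset.sum_congr rfl fun b _ => by ring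
  rw [e1, Finset.sum_mul_sum]
  ring

end Aux

section Chain

/-- The "chain" vector: `1` on coordinates `0..K`, `-(K+1)` at `K+1`, `0` beyond. -/
def chain (N K : ℕ) (i : Fin N) : ℝ :=
  if (i:ℕ) ≤ K then 1 else if (i:ℕ) = K+1 then -((K:ℝ)+1) else 0

lemma sum_if_le {N K : ℕ} (hK : K < N) :
    ∑ i : Fin N, (if (i:ℕ) ≤ K then (1:ℝ) else 0) = (K:ℝ)+1 := by
  rw [Fin.sum_univ_eq_sum_range (fun n => if n ≤ K then (1:ℝ) else 0), Finset.sum_boole]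
  have h : (Finset.range N).filter (fun n => n ≤ K) = Finset.range (K+1) := by
    ext m; simp only [Finset.mem_filter, Finset.mem_range]; omega
  rw [h, Finset.card_range]; push_cast; ring

lemma sum_if_eq {N K : ℕ} (hK : K < N) (c : ℝ) :
    ∑ i : Fin N, (if (i:ℕ) = K then c else 0) = c := by
  rw [Fin.sum_univ_eq_sum_range (fun n => if n = K then c else 0),
    Finset.sum_ite_eq' (Finset.range N) K (fun _ => c), if_pos (Finset.mem_range.2 hK)]

lemma chain_sum {N K : ℕ} (h : K + 1 < N) : ∑ i : Fin N, chain N K i = 0 := by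
  have hp : ∀ i : Fin N, chain N K i
      = (if (i:ℕ) ≤ K then (1:ℝ) else 0) + (if (i:ℕ) = K+1 then -((K:ℝ)+1) else 0) := by
    intro i; unfold chain; split_ifs <;> first | ring1 | (exfalso; omega)
  rw [Finset.sum_congr rfl (fun i _ => hp i), Finset.sum_add_distrib,
    sum_if_le (by omega), sum_if_eq h]
  ring

lemma chain_dot_self {N K : ℕ} (h : K + 1 < N) :
    ∑ i : Fin N, chain N K i * chain N K i = ((K:ℝ)+1) + ((K:ℝ)+1)^2 := by
  have hp : ∀ i : Fin N, chain N K i * chain N K i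
      = (if (i:ℕ) ≤ K then (1:ℝ) else 0) + (if (i:ℕ) = K+1 then ((K:ℝ)+1)^2 else 0) := by
    intro i; unfold chain; split_ifs <;> first | ring1 | (exfalso; omega)
  rw [Finset.sum_congr rfl (fun i _ => hp i), Finset.sum_add_distrib,
    sum_if_le (by omega), sum_if_eq h]

lemma chain_dot_chain {N K L : ℕ} (hKL : K < L) (h : K + 1 < N) :
    ∑ i : Fin N, chain N K i * chain N L i = 0 := by
  have hp : ∀ i : Fin N, chain N K i * chain N L i = chain N K i := by
    intro i; unfold chain; split_ifs <;> first | ring1 | (exfalso; omega)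
  rw [Finset.sum_congr rfl (fun i _ => hp i), chain_sum h]

lemma sum_chain_mul_const {N K : ℕ} (h : K + 1 < N) (c : ℝ) :
    ∑ i : Fin N, chain N K i * c = 0 := by
  rw [← Finset.sum_mul, chain_sum h, zero_mul]

lemma sum_const_mul_chain {N K : ℕ} (h : K + 1 < N) (c : ℝ) :
    ∑ i : Fin N, c * chain N K i = 0 := by
  rw [← Finset.mul_sum, chain_sum h, mul_zero]

lemma sum_fin_const (N : ℕ) (c : ℝ) : ∑ _i : Fin N, c = (N:ℝ) * c := by
  rw [Finset.sum_const, Finset.card_univ, Fintype.card_fin, nsmul_eq_mul]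

lemma cast_pred {p : ℕ} (hp : 1 ≤ p) : ((p - 1 : ℕ) : ℝ) = (p:ℝ) - 1 := by
  rw [Nat.cast_sub hp, Nat.cast_one]

end Chain

section Vectors

/-- The positive vector `z = (q+r)·∑h − r(p−1)·∑e` of `κ^⊥`. -/
def zvec (p q r : ℕ) : Idx p q r → ℝ :=
  Sum.elim (fun _ => (q:ℝ)+(r:ℝ)) (fun _ => -((r:ℝ)*((p:ℝ)-1)))

/-- Orthogonalized chain vectors in the `h`-block. -/
def vvec (p q r : ℕ) (k : Fin (p-2)) : Idx p q r → ℝ :=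
  Sum.elim (fun i => chain (p-1) (k:ℕ) i) (fun _ => 0)

/-- Orthogonalized chain vectors in the `e`-block. -/
def uvec (p q r : ℕ) (k : Fin (q+r-1)) : Idx p q r → ℝ :=
  Sum.elim (fun _ => 0) (fun j => chain (q+r) (k:ℕ) j)

/-- The full candidate orthogonal family. -/
def cfam (p q r : ℕ) : Option (Fin (p-2) ⊕ Fin (q+r-1)) → (Idx p q r → ℝ)
  | none => zvec p q r
  | some (Sum.inl k) => vvec p q r k
  | some (Sum.inr k) => uvec p q r k

lemma kappa_inl (p q r : ℕ) (i : Fin (p-1)) : kappa p q r (Sum.inl i) = (r:ℤ) := by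
  simp [kappa, hvec, evec, Finset.sum_apply, Finset.sum_ite_eq]

lemma kappa_inr (p q r : ℕ) (j : Fin (q+r)) :
    kappa p q r (Sum.inr j) = -(((p:ℤ)-1) * ((r:ℤ)-1) - 1) := by
  simp [kappa, hvec, evec, Finset.sum_apply, Finset.sum_ite_eq]

lemma kappaR_inl (p q r : ℕ) (i : Fin (p-1)) : kappaR p q r (Sum.inl i) = (r:ℝ) := by
  simp [kappaR, kappa_inl]

lemma kappaR_inr (p q r : ℕ) (j : Fin (q+r)) :
    kappaR p q r (Sum.inr j) = -(((p:ℝ)-1) * ((r:ℝ)-1) - 1) := by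
  rw [kappaR, kappa_inr]; push_cast; ring

end Vectors

section Pairings

variable {p q r : ℕ}

lemma z_mem (hp : 2 ≤ p) : bform p q r (zvec p q r) (kappaR p q r) = 0 := by
  rw [bform_eq]
  simp only [zvec, Sum.elim_inl, Sum.elim_inr, kappaR_inl, kappaR_inr]
  rw [sum_fin_const, sum_fin_const, sum_fin_const, sum_fin_const, cast_pred (by omega)]
  push_cast
  ring

lemma v_mem (k : Fin (p-2)) : bform p q r (vvec p q r k) (kappaR p q r) = 0 := by
  have hk : (k:ℕ) + 1 < p - 1 := by have := k.isLt; omega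
  rw [bform_eq]
  simp only [vvec, Sum.elim_inl, Sum.elim_inr, kappaR_inl, kappaR_inr, zero_mul,
    Finset.sum_const_zero]
  rw [chain_sum hk, sum_chain_mul_const hk]
  ring

lemma u_mem (k : Fin (q+r-1)) : bform p q r (uvec p q r k) (kappaR p q r) = 0 := by
  have hk : (k:ℕ) + 1 < q + r := by have := k.isLt; omega
  rw [bform_eq]
  simp only [uvec, Sum.elim_inl, Sum.elim_inr, kappaR_inl, kappaR_inr, zero_mul,
    Finset.sum_const_zero]
  rw [sum_chain_mul_const hk]
  ring

lemma z_dot_v (k : Fin (p-2)) : bform p q r (zvec p q r) (vvec p q r k) = 0 := by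
  have hk : (k:ℕ) + 1 < p - 1 := by have := k.isLt; omega
  rw [bform_eq]
  simp only [zvec, vvec, Sum.elim_inl, Sum.elim_inr, mul_zero, Finset.sum_const_zero]
  rw [chain_sum hk, sum_const_mul_chain hk]
  ring

lemma z_dot_u (k : Fin (q+r-1)) : bform p q r (zvec p q r) (uvec p q r k) = 0 := by
  have hk : (k:ℕ) + 1 < q + r := by have := k.isLt; omega
  rw [bform_eq]
  simp only [zvec, uvec, Sum.elim_inl, Sum.elim_inr, mul_zero, Finset.sum_const_zero]
  rw [sum_const_mul_chain hk]
  ring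

lemma v_dot_u (k : Fin (p-2)) (l : Fin (q+r-1)) :
    bform p q r (vvec p q r k) (uvec p q r l) = 0 := by
  rw [bform_eq]
  simp only [vvec, uvec, Sum.elim_inl, Sum.elim_inr, mul_zero, zero_mul,
    Finset.sum_const_zero]
  ring

lemma v_dot_v (k l : Fin (p-2)) (hkl : (k:ℕ) < (l:ℕ)) :
    bform p q r (vvec p q r k) (vvec p q r l) = 0 := by
  have hk : (k:ℕ) + 1 < p - 1 := by have := k.isLt; omega
  rw [bform_eq]
  simp only [vvec, Sum.elim_inl, Sum.elim_inr, mul_zero, zero_mul, Finset.sum_const_zero]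
  rw [chain_sum hk, chain_dot_chain hkl hk]
  ring

lemma u_dot_u (k l : Fin (q+r-1)) (hkl : (k:ℕ) < (l:ℕ)) :
    bform p q r (uvec p q r k) (uvec p q r l) = 0 := by
  have hk : (k:ℕ) + 1 < q + r := by have := k.isLt; omega
  rw [bform_eq]
  simp only [uvec, Sum.elim_inl, Sum.elim_inr, mul_zero, zero_mul, Finset.sum_const_zero]
  rw [chain_dot_chain hkl hk]
  ring

lemma v_sq (k : Fin (p-2)) :
    bform p q r (vvec p q r k) (vvec p q r k) = -((((k:ℕ):ℝ)+1) + (((k:ℕ):ℝ)+1)^2) := by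
  have hk : (k:ℕ) + 1 < p - 1 := by have := k.isLt; omega
  rw [bform_eq]
  simp only [vvec, Sum.elim_inl, Sum.elim_inr, mul_zero, zero_mul, Finset.sum_const_zero]
  rw [chain_sum hk, chain_dot_self hk]
  ring

lemma u_sq (k : Fin (q+r-1)) :
    bform p q r (uvec p q r k) (uvec p q r k) = -((((k:ℕ):ℝ)+1) + (((k:ℕ):ℝ)+1)^2) := by
  have hk : (k:ℕ) + 1 < q + r := by have := k.isLt; omega
  rw [bform_eq]
  simp only [uvec, Sum.elim_inl, Sum.elim_inr, mul_zero, zero_mul, Finset.sum_const_zero]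
  rw [chain_dot_self hk]
  ring

lemma z_sq (hp : 2 ≤ p) :
    bform p q r (zvec p q r) (zvec p q r)
      = ((p:ℝ)-1) * ((q:ℝ)+(r:ℝ)) *
        ((p:ℝ)*(q:ℝ)*(r:ℝ) - ((p:ℝ)*(q:ℝ) + (p:ℝ)*(r:ℝ) + (q:ℝ)*(r:ℝ))) := by
  rw [bform_eq]
  simp only [zvec, Sum.elim_inl, Sum.elim_inr]
  rw [sum_fin_const, sum_fin_const, sum_fin_const, cast_pred (by omega)]
  push_cast
  ring

end Pairings

section Assembly

variable (p q r : ℕ)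

/-- Pairing against a fixed vector, as a linear map. -/
def bformL (y : Idx p q r → ℝ) : (Idx p q r → ℝ) →ₗ[ℝ] ℝ where
  toFun x := bform p q r x y
  map_add' a b := bform_add_left p q r a b y
  map_smul' c x := by simpa using bform_smul_left p q r c x y

variable {p q r}

lemma cfam_mem (hp : 2 ≤ p) (a : Option (Fin (p-2) ⊕ Fin (q+r-1))) :
    cfam p q r a ∈ LsubR p q r := by
  show bform p q r (cfam p q r a) (kappaR p q r) = 0
  match a with
  | none => exact z_mem hp
  | some (Sum.inl k) => exact v_mem k
  | some (Sum.inr k) => exact u_mem k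

lemma cfam_orth (a b : Option (Fin (p-2) ⊕ Fin (q+r-1))) (hab : a ≠ b) :
    bform p q r (cfam p q r a) (cfam p q r b) = 0 := by
  match a, b with
  | none, none => exact absurd rfl hab
  | none, some (Sum.inl k) => exact z_dot_v k
  | none, some (Sum.inr k) => exact z_dot_u k
  | some (Sum.inl k), none => rw [bform_comm]; exact z_dot_v k
  | some (Sum.inr k), none => rw [bform_comm]; exact z_dot_u k
  | some (Sum.inl k), some (Sum.inr l) => exact v_dot_u k l
  | some (Sum.inr k), some (Sum.inl l) => rw [bform_comm]; exact v_dot_u l k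
  | some (Sum.inl k), some (Sum.inl l) =>
      rcases lt_trichotomy (k:ℕ) (l:ℕ) with h | h | h
      · exact v_dot_v k l h
      · exact absurd (congrArg (fun x => some (Sum.inl x)) (Fin.ext h)) hab
      · rw [bform_comm]; exact v_dot_v l k h
  | some (Sum.inr k), some (Sum.inr l) =>
      rcases lt_trichotomy (k:ℕ) (l:ℕ) with h | h | h
      · exact u_dot_u k l h
      · exact absurd (congrArg (fun x => some (Sum.inr x)) (Fin.ext h)) hab
      · rw [bform_comm]; exact u_dot_u l k h

lemma cfam_sq_neg (a : Fin (p-2) ⊕ Fin (q+r-1)) :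
    bform p q r (cfam p q r (some a)) (cfam p q r (some a)) < 0 := by
  match a with
  | Sum.inl k =>
      rw [show cfam p q r (some (Sum.inl k)) = vvec p q r k from rfl, v_sq k]
      have h : (0:ℝ) < ((((k:ℕ):ℝ))+1) + ((((k:ℕ):ℝ))+1)^2 := by positivity
      linarith
  | Sum.inr k =>
      rw [show cfam p q r (some (Sum.inr k)) = uvec p q r k from rfl, u_sq k]
      have h : (0:ℝ) < ((((k:ℕ):ℝ))+1) + ((((k:ℕ):ℝ))+1)^2 := by positivity
      linarith

end Assembly

/-- if `1/p + 1/q + 1/r < 1` then the root lattice `L_n = κ^⊥ ∩ Λ_n` is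
hyperbolic: `L_n ⊗ ℝ` admits an orthogonal basis (for the restricted bilinear form)
consisting of one vector of positive square and `n − 1` vectors of negative square
(here `n = p + q + r − 2`). -/
theorem stmt_15 (p q r : ℕ) (hp : 2 ≤ p) (hq : 2 ≤ q) (hr : 3 ≤ r)
    (hpqr : 1 / (p : ℝ) + 1 / (q : ℝ) + 1 / (r : ℝ) < 1) :
    ∃ (b : Module.Basis (Fin (p + q + r - 2)) ℝ (LsubR p q r)) (i₀ : Fin (p + q + r - 2)),
      (∀ i j, i ≠ j →
        bform p q r ((b i : Idx p q r → ℝ)) ((b j : Idx p q r → ℝ)) = 0) ∧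
      0 < bform p q r ((b i₀ : Idx p q r → ℝ)) ((b i₀ : Idx p q r → ℝ)) ∧
      ∀ i, i ≠ i₀ →
        bform p q r ((b i : Idx p q r → ℝ)) ((b i : Idx p q r → ℝ)) < 0 := by
  classical
  have hp' : (2:ℝ) ≤ p := by exact_mod_cast hp
  have hq' : (2:ℝ) ≤ q := by exact_mod_cast hq
  have hr' : (3:ℝ) ≤ r := by exact_mod_cast hr
  have hp0 : (0:ℝ) < p := by linarith
  have hq0 : (0:ℝ) < q := by linarith
  have hr0 : (0:ℝ) < r := by linarith
  have key : (p:ℝ)*q + (p:ℝ)*r + (q:ℝ)*r < (p:ℝ)*q*r := by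
    have h := hpqr
    rw [div_add_div _ _ (ne_of_gt hp0) (ne_of_gt hq0),
      div_add_div _ _ (by positivity) (ne_of_gt hr0), div_lt_one (by positivity)] at h
    nlinarith [h]
  have zpos : 0 < bform p q r (cfam p q r none) (cfam p q r none) := by
    rw [show cfam p q r none = zvec p q r from rfl, z_sq hp]
    have h1 : (0:ℝ) < (p:ℝ) - 1 := by linarith
    have h2 : (0:ℝ) < (q:ℝ) + (r:ℝ) := by linarith
    exact mul_pos (mul_pos h1 h2) (by linarith)
  have sneg : ∀ a, bform p q r (cfam p q r (some a)) (cfam p q r (some a)) < 0 :=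
    cfam_sq_neg
  have hne : ∀ a : Option (Fin (p-2) ⊕ Fin (q+r-1)),
      bform p q r (cfam p q r a) (cfam p q r a) ≠ 0 := by
    rintro (_ | a)
    · exact ne_of_gt zpos
    · exact ne_of_lt (sneg a)
  -- linear independence of the family in the ambient space
  have licf : LinearIndependent ℝ (cfam p q r) := by
    rw [Fintype.linearIndependent_iff]
    intro g hg a
    have h1 : ∑ i, g i * bform p q r (cfam p q r i) (cfam p q r a) = 0 := by
      have h2 := congrArg (bformL p q r (cfam p q r a)) hg
      rw [map_sum, map_zero] at h2
      simpa [bformL] using h2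
    rw [Fintype.sum_eq_single a (fun b hb => by rw [cfam_orth b a hb, mul_zero])] at h1
    exact (mul_eq_zero.1 h1).resolve_right (hne a)
  -- the family inside the subspace
  let c' : Option (Fin (p-2) ⊕ Fin (q+r-1)) → LsubR p q r :=
    fun a => ⟨cfam p q r a, cfam_mem hp a⟩
  have lic' : LinearIndependent ℝ c' := by
    apply LinearIndependent.of_comp (LsubR p q r).subtype
    exact licf
  -- dimension count
  have hkerEq : LsubR p q r = LinearMap.ker (bformL p q r (kappaR p q r)) := by
    ext x; exact Iff.rfl
  have hrank : Module.finrank ℝ (LsubR p q r) = p + q + r - 2 := by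
    have hnz : bformL p q r (kappaR p q r) ≠ 0 := by
      intro h0
      have hx : bform p q r
          (Sum.elim (fun _ => (0:ℝ)) (fun j => if j = (⟨0, by omega⟩ : Fin (q+r)) then 1 else 0))
          (kappaR p q r) = ((p:ℝ)-1) * ((r:ℝ)-1) - 1 := by
        rw [bform_eq]
        simp only [Sum.elim_inl, Sum.elim_inr, zero_mul, Finset.sum_const_zero, kappaR_inr,
          ite_mul, one_mul, Finset.sum_ite_eq', Finset.mem_univ, if_true]
        ring
      have hx0 : bform p q r
          (Sum.elim (fun _ => (0:ℝ)) (fun j => if j = (⟨0, by omega⟩ : Fin (q+r)) then 1 else 0))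
          (kappaR p q r) = 0 := by
        have := congrFun (congrArg (fun (f : (Idx p q r → ℝ) →ₗ[ℝ] ℝ) => (f : (Idx p q r → ℝ) → ℝ)) h0)
          (Sum.elim (fun _ => (0:ℝ)) (fun j => if j = (⟨0, by omega⟩ : Fin (q+r)) then 1 else 0))
        simpa [bformL] using this
      rw [hx] at hx0
      nlinarith [hx0]
    have hrn := LinearMap.finrank_range_add_finrank_ker (bformL p q r (kappaR p q r))
    have hdom : Module.finrank ℝ (Idx p q r → ℝ) = (p-1) + (q+r) := by
      rw [Module.finrank_pi, Fintype.card_sum, Fintype.card_fin, Fintype.card_fin]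
    have hr1 : Module.finrank ℝ (LinearMap.range (bformL p q r (kappaR p q r))) = 1 := by
      have hle : Module.finrank ℝ (LinearMap.range (bformL p q r (kappaR p q r))) ≤ 1 := by
        simpa [Module.finrank_self] using
          Submodule.finrank_le (LinearMap.range (bformL p q r (kappaR p q r)))
      have hne0 : Module.finrank ℝ (LinearMap.range (bformL p q r (kappaR p q r))) ≠ 0 := by
        rw [Ne, Submodule.finrank_eq_zero, LinearMap.range_eq_bot]
        exact hnz
      omega
    rw [hkerEq]
    rw [hdom, hr1] at hrn
    omega
  have hcard : Fintype.card (Option (Fin (p-2) ⊕ Fin (q+r-1))) = p + q + r - 2 := by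
    rw [Fintype.card_option, Fintype.card_sum, Fintype.card_fin, Fintype.card_fin]
    omega
  have hcard' : Fintype.card (Option (Fin (p-2) ⊕ Fin (q+r-1)))
      = Module.finrank ℝ (LsubR p q r) := by rw [hrank, hcard]
  haveI : Nonempty (Option (Fin (p-2) ⊕ Fin (q+r-1))) := ⟨none⟩
  set bb := basisOfLinearIndependentOfCardEqFinrank lic' hcard' with hbbdef
  have hbbfun : ⇑bb = c' := coe_basisOfLinearIndependentOfCardEqFinrank lic' hcard'
  have hbb : ∀ a, ((bb a : LsubR p q r) : Idx p q r → ℝ) = cfam p q r a := by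
    intro a; rw [hbbfun]
  set e : Option (Fin (p-2) ⊕ Fin (q+r-1)) ≃ Fin (p+q+r-2) :=
    Fintype.equivFinOfCardEq hcard with hedef
  refine ⟨bb.reindex e, e none, ?_, ?_, ?_⟩
  · intro i j hij
    rw [Module.Basis.reindex_apply, Module.Basis.reindex_apply, hbb, hbb]
    exact cfam_orth _ _ (fun h => hij (by rw [← e.apply_symm_apply i, h, e.apply_symm_apply]))
  · rw [Module.Basis.reindex_apply, Equiv.symm_apply_apply, hbb]
    exact zpos
  · intro i hi
    rw [Module.Basis.reindex_apply, hbb]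
    obtain ⟨a, ha⟩ : ∃ a, e.symm i = some a := by
      cases h : e.symm i with
      | none =>
          exact absurd ((e.apply_symm_apply i).symm.trans (congrArg e h)) hi
      | some a => exact ⟨a, rfl⟩
    rw [ha]
    exact sneg a
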